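/- arXiv:2109.04764 — 12 statements merged into one kernel-verified Lean document; each statement's English description precedes it below -/
import Mathlib

section
/- Let T be a commutative cancellative monoid and H a submonoid of T. Then the inclusion map H ↪ T is a transfer homomorphism if and only if the following three conditions hold: (i) T^× ∩ H = H^×, (ii) T = H·T^×, and (iii) the extension H ⊆ T is inert. -/
/-- `x` is a unit of the submonoid `H`. -/
def IsUnitIn {T : Type*} [CancelCommMonoid T] (H : Submonoid T) (x : T) : Prop :=
  x ∈ H ∧ ∃ y ∈ H, x * y = 1

/-- The extension `H ⊆ T` is inert. -/
def Inert {T : Type*} [CancelCommMonoid T] (H : Submonoid T) : Prop :=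
  ∀ x y : T, x * y ∈ H → ∃ ε : Tˣ, x * ε ∈ H ∧ y * ↑ε⁻¹ ∈ H

/-- The inclusion `H ↪ T` is a transfer homomorphism:
(T1) `T = H·T^×` and `H ∩ T^× = H^×`, and (T2) factorizations lift. -/
def TransferIncl {T : Type*} [CancelCommMonoid T] (H : Submonoid T) : Prop :=
  ((∀ t : T, ∃ h ∈ H, ∃ ε : Tˣ, t = h * ε) ∧ (∀ h ∈ H, IsUnit h → IsUnitIn H h)) ∧
    ∀ u ∈ H, ∀ b c : T, u = b * c →
      ∃ v ∈ H, ∃ w ∈ H, ∃ ε η : Tˣ, u = v * w ∧ v = b * ε ∧ w = c * η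

theorem stmt0 {T : Type*} [CancelCommMonoid T] (H : Submonoid T) :
    TransferIncl H ↔
      ((∀ h ∈ H, (IsUnit h ↔ IsUnitIn H h)) ∧
        (∀ t : T, ∃ h ∈ H, ∃ ε : Tˣ, t = h * ε) ∧ Inert H) := by
  constructor
  · rintro ⟨⟨hsur, hunit⟩, hT2⟩
    refine ⟨fun h hH => ⟨hunit h hH, fun ⟨_, y, _, hxy⟩ => isUnit_iff_exists_inv.mpr ⟨y, hxy⟩⟩,
      hsur, fun x y hxy => ?_⟩
    obtain ⟨v, hv, w, hw, ε, η, huvw, hvb, hwc⟩ := hT2 _ hxy x y rfl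
    have hεη : (ε : T) * η = 1 := by
      have : x * y * 1 = x * y * ((ε : T) * η) := by
        rw [mul_one]
        calc x * y = v * w := huvw
        _ = (x * ε) * (y * η) := by rw [hvb, hwc]
        _ = x * y * ((ε : T) * η) := by
              rw [mul_assoc, mul_assoc, mul_left_comm (ε : T)]
      exact (mul_left_cancel this).symm
    have hη : η = ε⁻¹ :=
      eq_inv_of_mul_eq_one_right (Units.ext (by simpa using hεη))
    exact ⟨ε, hvb ▸ hv, by rw [← hη, ← hwc]; exact hw⟩
  · rintro ⟨hiff, hsur, hinert⟩
    refine ⟨⟨hsur, fun h hH hu => (hiff h hH).mp hu⟩, fun u hu b c hbc => ?_⟩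
    obtain ⟨ε, hbε, hcε⟩ := hinert b c (hbc ▸ hu)
    exact ⟨b * ε, hbε, c * ε⁻¹, hcε, ε, ε⁻¹, by rw [hbc]; simp [mul_comm, mul_assoc, mul_left_comm], rfl, rfl⟩
end

section
/- Let T be a commutative cancellative monoid and H a submonoid of T such that every element of T divides some element of H within T (i.e., T is an overmonoid of H in the sense that T is contained in the quotient group of H). If H ⊆ T is inert, then T = H·T^×. -/
theorem Inert.exists_mem_mul_unit_of_mul_mem {T : Type*} [CancelCommMonoid T] {H : Submonoid T}
    (hinert : Inert H) {x y : T} (hxy : x * y ∈ H) : ∃ h ∈ H, ∃ ε : Tˣ, y = h * ε := by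
  obtain ⟨ε, -, hy⟩ := hinert x y hxy
  exact ⟨y * ↑ε⁻¹, hy, ε, by rw [Units.inv_mul_cancel_right]⟩

theorem stmt1 {T : Type*} [CancelCommMonoid T] (H : Submonoid T)
    (hover : ∀ y : T, ∃ x ∈ H, x * y ∈ H) (hinert : Inert H) :
    ∀ t : T, ∃ h ∈ H, ∃ ε : Tˣ, t = h * ε := by
  intro t
  obtain ⟨x, -, hxt⟩ := hover t
  exact hinert.exists_mem_mul_unit_of_mul_mem hxt
end

section
/- Let T be a commutative cancellative monoid and H ⊆ T a submonoid with T^× ∩ H = H^× and T = H·T^×. Then every atom of T is of the form u·ε with u an atom of H and ε ∈ T^×. -/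
/-- `a` is an atom of the monoid `T`. -/
def IsAtomOf (T : Type*) [CancelCommMonoid T] (a : T) : Prop :=
  ¬IsUnit a ∧ ∀ x y : T, a = x * y → IsUnit x ∨ IsUnit y

/-- `a` is an atom of the submonoid `H`. -/
def IsAtomIn {T : Type*} [CancelCommMonoid T] (H : Submonoid T) (a : T) : Prop :=
  a ∈ H ∧ ¬IsUnitIn H a ∧
    ∀ x ∈ H, ∀ y ∈ H, a = x * y → IsUnitIn H x ∨ IsUnitIn H y

theorem stmt2 {T : Type*} [CancelCommMonoid T] (H : Submonoid T)
    (hunits : ∀ h ∈ H, IsUnit h → IsUnitIn H h)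
    (hTH : ∀ t : T, ∃ h ∈ H, ∃ ε : Tˣ, t = h * ε) :
    ∀ a : T, IsAtomOf T a → ∃ u : T, IsAtomIn H u ∧ ∃ ε : Tˣ, a = u * ε := by
  intro a ha
  obtain ⟨h, hh, ε, rfl⟩ := hTH a
  refine ⟨h, ⟨hh, ?_, ?_⟩, ε, rfl⟩
  · rintro ⟨-, y, -, hy⟩
    exact ha.1 ((IsUnit.of_mul_eq_one (a := h) y hy).mul ε.isUnit)
  · intro x hx y hy hxy
    have := ha.2 x (y * ε) (by rw [hxy, mul_assoc])
    rcases this with h1 | h1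
    · exact Or.inl (hunits x hx h1)
    · exact Or.inr (hunits y hy (by simpa using h1.mul (ε⁻¹).isUnit))
end

section
/- Let H ⊆ L ⊆ T be commutative cancellative monoids such that the inclusion H ↪ T is a transfer homomorphism. If T^× ∩ L = L^× and L = H·L^×, then the inclusion L ↪ T is a transfer homomorphism. -/
theorem IsUnitIn.isUnit {T : Type*} [CancelCommMonoid T] {H : Submonoid T} {x : T}
    (hx : IsUnitIn H x) : IsUnit x :=
  let ⟨_, y, _, hxy⟩ := hx
  IsUnit.of_mul_eq_one y hxy

theorem TransferIncl.exists_factorization_of_mul_unit {T : Type*} [CancelCommMonoid T]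
    {H : Submonoid T} (hH : TransferIncl H) {h : T} (hh : h ∈ H) (e : Tˣ) {b c : T}
    (hbc : h * e = b * c) :
    ∃ v ∈ H, ∃ w ∈ H, ∃ ε η : Tˣ, h * e = v * (w * e) ∧ v = b * ε ∧ w * e = c * η := by
  have hh_eq : h = b * (c * ↑e⁻¹) := by
    calc h = h * e * ↑e⁻¹ := by rw [Units.mul_inv_cancel_right]
      _ = b * (c * ↑e⁻¹) := by rw [hbc, mul_assoc]
  obtain ⟨v, hv, w, hw, ε, η, rfl, hvb, hwc⟩ := hH.2 h hh b _ hh_eq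
  refine ⟨v, hv, w, hw, ε, η, mul_assoc _ _ _, hvb, ?_⟩
  rw [hwc, mul_right_comm, mul_assoc c, Units.inv_mul, mul_one]

theorem stmt5 {T : Type*} [CancelCommMonoid T] (H L : Submonoid T) (hHL : H ≤ L)
    (htransfer : TransferIncl H)
    (hunits : ∀ x ∈ L, IsUnit x → IsUnitIn L x)
    (hL : ∀ x ∈ L, ∃ h ∈ H, ∃ ε : T, IsUnitIn L ε ∧ x = h * ε) :
    TransferIncl L := by
  refine ⟨⟨fun t => ?_, hunits⟩, fun u hu b c hbc => ?_⟩
  · obtain ⟨h, hh, ε, rfl⟩ := htransfer.1.1 t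
    exact ⟨h, hHL hh, ε, rfl⟩
  · obtain ⟨h, hh, e, he, rfl⟩ := hL u hu
    obtain ⟨v, hv, w, hw, ε, η, hu, hvb, hwc⟩ :=
      htransfer.exists_factorization_of_mul_unit hh he.isUnit.unit hbc
    exact ⟨v, hHL hv, w * e, mul_mem (hHL hw) he.1, ε, η, hu, hvb, hwc⟩
end

section
/- Let H be a valuation monoid with quotient group K and let T be any overmonoid of H (i.e., H ⊆ T ⊆ K). Then there is a submonoid S of H such that T = S^{-1}H = {s^{-1}·x : s ∈ S, x ∈ H}. -/
/-! Take for `S` the elements of `H` whose inverses lie in `T`. An element `t ∈ T` is then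
`1⁻¹ * t` if `t ∈ H`, and otherwise `t⁻¹ ∈ H`, so `t⁻¹ ∈ S` and `t = (t⁻¹)⁻¹ * 1`. -/

namespace Submonoid

variable {K : Type*} [CommGroup K]

def invMemOf (H T : Submonoid K) : Submonoid K :=
  H ⊓ T.comap invMonoidHom

theorem mem_invMemOf {H T : Submonoid K} {s : K} : s ∈ H.invMemOf T ↔ s ∈ H ∧ s⁻¹ ∈ T :=
  Iff.rfl

theorem invMemOf_le (H T : Submonoid K) : H.invMemOf T ≤ H :=
  inf_le_left

theorem inv_mul_mem_of_mem_invMemOf {H T : Submonoid K} (hHT : H ≤ T) {s x : K}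
    (hs : s ∈ H.invMemOf T) (hx : x ∈ H) : s⁻¹ * x ∈ T :=
  T.mul_mem (mem_invMemOf.mp hs).2 (hHT hx)

theorem exists_eq_inv_mul_of_mem {H T : Submonoid K} (hval : ∀ x : K, x ∈ H ∨ x⁻¹ ∈ H)
    {t : K} (ht : t ∈ T) : ∃ s ∈ H.invMemOf T, ∃ x ∈ H, t = s⁻¹ * x := by
  rcases hval t with htH | htinvH
  · exact ⟨1, mem_invMemOf.mpr ⟨H.one_mem, by simp⟩, t, htH, by simp⟩
  · exact ⟨t⁻¹, mem_invMemOf.mpr ⟨htinvH, by simpa using ht⟩, 1, H.one_mem, by simp⟩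

end Submonoid

theorem stmt7 {K : Type*} [CommGroup K] (H T : Submonoid K)
    (hval : ∀ x : K, x ∈ H ∨ x⁻¹ ∈ H) (hHT : H ≤ T) :
    ∃ S : Submonoid K, S ≤ H ∧ ∀ t : K, t ∈ T ↔ ∃ s ∈ S, ∃ x ∈ H, t = s⁻¹ * x := by
  refine ⟨H.invMemOf T, H.invMemOf_le T, fun t => ⟨Submonoid.exists_eq_inv_mul_of_mem hval, ?_⟩⟩
  rintro ⟨s, hs, x, hx, rfl⟩
  exact Submonoid.inv_mul_mem_of_mem_invMemOf hHT hs hx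
end

section
/- A commutative cancellative monoid H is a valuation monoid if and only if H is a GCD-monoid which satisfies property (U). -/
/-- `H` is a valuation monoid (inside its quotient group `K`). -/
def IsValuation {K : Type*} [CommGroup K] (H : Submonoid K) : Prop :=
  ∀ x : K, x ∈ H ∨ x⁻¹ ∈ H

/-- divisibility inside the submonoid `H`. -/
def DvdIn {K : Type*} [CommGroup K] (H : Submonoid K) (a b : K) : Prop :=
  ∃ c ∈ H, b = a * c

/-- `H` is a GCD-monoid: any two elements have a greatest common divisor. -/
def IsGCDMonoidIn {K : Type*} [CommGroup K] (H : Submonoid K) : Prop :=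
  ∀ a ∈ H, ∀ b ∈ H, ∃ t ∈ H, DvdIn H t a ∧ DvdIn H t b ∧
    ∀ s ∈ H, DvdIn H s a → DvdIn H s b → DvdIn H s t

/-- Property (U): every overmonoid `T` of `H` with `T = H·T^×` is a quotient
monoid `S⁻¹H` for some submonoid `S ⊆ H`. -/
def PropertyU {K : Type*} [CommGroup K] (H : Submonoid K) : Prop :=
  ∀ T : Submonoid K, H ≤ T →
    (∀ t ∈ T, ∃ h ∈ H, ∃ ε : K, ε ∈ T ∧ ε⁻¹ ∈ T ∧ t = h * ε) →
    ∃ S : Submonoid K, S ≤ H ∧ ∀ t : K, t ∈ T ↔ ∃ s ∈ S, ∃ x ∈ H, t = s⁻¹ * x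

/-!
In a valuation monoid one of any two elements divides the other, which gives gcds, and
`S = {s ∈ H | s⁻¹ ∈ T}` witnesses (U). Conversely, write `x = a / b` with `a, b` coprime and apply
(U) to `T = H·⟨x⟩`. It yields `s ∈ H` with `x ∈ s⁻¹H` and `s⁻¹ = h xⁿ`. For `n = 0` this puts
`x` in `H`; for `n > 0` it gives `a ∣ bⁿ`, so `a` is a unit by Euclid's lemma and `x⁻¹ ∈ H`;
`n < 0` is symmetric.
-/

open scoped Pointwise

section

variable {K : Type*} [CommGroup K] {H : Submonoid K}

theorem dvdIn_iff {a b : K} : DvdIn H a b ↔ a⁻¹ * b ∈ H :=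
  ⟨fun ⟨c, hc, hb⟩ => by rwa [hb, inv_mul_cancel_left],
    fun h => ⟨a⁻¹ * b, h, (mul_inv_cancel_left a b).symm⟩⟩

theorem dvdIn_refl (a : K) : DvdIn H a a :=
  ⟨1, H.one_mem, (mul_one a).symm⟩

theorem dvdIn_mul_right (a : K) {c : K} (hc : c ∈ H) : DvdIn H a (a * c) :=
  ⟨c, hc, rfl⟩

theorem DvdIn.trans {a b c : K} (hab : DvdIn H a b) (hbc : DvdIn H b c) : DvdIn H a c := by
  obtain ⟨d, hd, rfl⟩ := hab
  obtain ⟨e, he, rfl⟩ := hbc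
  exact ⟨d * e, mul_mem hd he, mul_assoc a d e⟩

theorem dvdIn_mul_left_iff (c : K) {a b : K} : DvdIn H (c * a) (c * b) ↔ DvdIn H a b := by
  simp only [dvdIn_iff, mul_inv_rev, mul_assoc, inv_mul_cancel_left]

theorem dvdIn_one_iff {a : K} : DvdIn H a 1 ↔ a⁻¹ ∈ H := by
  rw [dvdIn_iff, mul_one]

variable (H) in
def CoprimeIn (a b : K) : Prop :=
  ∀ s ∈ H, DvdIn H s a → DvdIn H s b → DvdIn H s 1

theorem CoprimeIn.symm {a b : K} (h : CoprimeIn H a b) : CoprimeIn H b a :=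
  fun s hs hsb hsa => h s hs hsa hsb

theorem exists_coprimeIn_of_isGCDMonoidIn (hgcd : IsGCDMonoidIn H) {a b : K} (ha : a ∈ H)
    (hb : b ∈ H) : ∃ a' ∈ H, ∃ b' ∈ H, CoprimeIn H a' b' ∧ a * b⁻¹ = a' * b'⁻¹ := by
  obtain ⟨d, hd, ⟨a', ha', rfl⟩, ⟨b', hb', rfl⟩, hmax⟩ := hgcd a ha b hb
  refine ⟨a', ha', b', hb', fun s hs hsa hsb => ?_, ?_⟩
  · have hds : DvdIn H (d * s) d :=
      hmax _ (mul_mem hd hs) ((dvdIn_mul_left_iff d).2 hsa) ((dvdIn_mul_left_iff d).2 hsb)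
    exact (dvdIn_mul_left_iff d).1 (by rwa [mul_one])
  · simp only [← div_eq_mul_inv, mul_div_mul_left_eq_div]

theorem CoprimeIn.dvdIn_of_dvdIn_mul (hgcd : IsGCDMonoidIn H) {a b c : K} (hab : CoprimeIn H a b)
    (ha : a ∈ H) (hb : b ∈ H) (hc : c ∈ H) (h : DvdIn H a (b * c)) : DvdIn H a c := by
  obtain ⟨g, -, hga, hgb, hmax⟩ := hgcd (c * a) (mul_mem hc ha) (c * b) (mul_mem hc hb)
  obtain ⟨f, hf, rfl⟩ := hmax c hc (dvdIn_mul_right c ha) (dvdIn_mul_right c hb)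
  have hf1 : DvdIn H f 1 :=
    hab f hf ((dvdIn_mul_left_iff c).1 hga) ((dvdIn_mul_left_iff c).1 hgb)
  have hag : DvdIn H a (c * f) := hmax a ha (by simpa only [mul_comm] using dvdIn_mul_right a hc)
    (by rwa [mul_comm])
  exact hag.trans (by simpa only [mul_one] using (dvdIn_mul_left_iff c).2 hf1)

theorem CoprimeIn.dvdIn_one_of_dvdIn_pow (hgcd : IsGCDMonoidIn H) {a b : K}
    (hab : CoprimeIn H a b) (ha : a ∈ H) (hb : b ∈ H) (m : ℕ) (h : DvdIn H a (b ^ m)) :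
    DvdIn H a 1 := by
  induction m with
  | zero => rwa [pow_zero] at h
  | succ m ih =>
    rw [pow_succ'] at h
    exact ih (hab.dvdIn_of_dvdIn_mul hgcd ha hb (pow_mem hb m) h)

theorem CoprimeIn.div_mem_of_inv_eq_mul_pow (hgcd : IsGCDMonoidIn H) {a b s h : K}
    (hab : CoprimeIn H a b) (ha : a ∈ H) (hb : b ∈ H) (hs : s ∈ H) (hh : h ∈ H) {m : ℕ}
    (hm : m ≠ 0) (heq : s⁻¹ = h * (a * b⁻¹) ^ m) : b * a⁻¹ ∈ H := by
  have hbm : b ^ m = a ^ m * (s * h) := by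
    rw [← inv_inv s, heq, mul_inv_rev, inv_mul_cancel_right, mul_pow, mul_inv, inv_pow, inv_inv,
      mul_inv_cancel_left]
  obtain ⟨k, rfl⟩ := Nat.exists_eq_succ_of_ne_zero hm
  have hab_pow : DvdIn H a (b ^ (k + 1)) :=
    ⟨a ^ k * (s * h), mul_mem (pow_mem ha k) (mul_mem hs hh), by rw [hbm, pow_succ', mul_assoc]⟩
  exact mul_mem hb (dvdIn_one_iff.1 (hab.dvdIn_one_of_dvdIn_pow hgcd ha hb _ hab_pow))

theorem IsValuation.isGCDMonoidIn (hval : IsValuation H) : IsGCDMonoidIn H := by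
  intro a ha b hb
  rcases hval (a⁻¹ * b) with h | h
  · exact ⟨a, ha, dvdIn_refl a, dvdIn_iff.2 h, fun s _ hsa _ => hsa⟩
  · refine ⟨b, hb, dvdIn_iff.2 ?_, dvdIn_refl b, fun s _ _ hsb => hsb⟩
    rwa [mul_inv_rev, inv_inv] at h

theorem IsValuation.propertyU (hval : IsValuation H) : PropertyU H := by
  intro T hHT _
  refine ⟨H ⊓ T⁻¹, inf_le_left, fun t => ⟨fun ht => ?_, ?_⟩⟩
  · rcases hval t with h | h
    · exact ⟨1, ⟨H.one_mem, by simp⟩, t, h, by simp⟩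
    · exact ⟨t⁻¹, ⟨h, by simpa using ht⟩, 1, H.one_mem, by simp⟩
  · rintro ⟨s, ⟨-, hs⟩, y, hy, rfl⟩
    exact mul_mem hs (hHT hy)

theorem PropertyU.exists_inv_eq_mul_zpow (hU : PropertyU H) (x : K) :
    ∃ s ∈ H, ∃ h₀ ∈ H, x = s⁻¹ * h₀ ∧ ∃ h₁ ∈ H, ∃ n : ℤ, s⁻¹ = h₁ * x ^ n := by
  set T := H ⊔ (Subgroup.zpowers x).toSubmonoid
  have hT : ∀ t, t ∈ T ↔ ∃ h ∈ H, ∃ n : ℤ, t = h * x ^ n := by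
    simp only [T, Submonoid.mem_sup, Subgroup.mem_toSubmonoid, Subgroup.mem_zpowers_iff]
    refine fun t => ⟨?_, ?_⟩
    · rintro ⟨h, hh, _, ⟨n, rfl⟩, rfl⟩
      exact ⟨h, hh, n, rfl⟩
    · rintro ⟨h, hh, n, rfl⟩
      exact ⟨h, hh, _, ⟨n, rfl⟩, rfl⟩
  obtain ⟨S, hSH, hST⟩ := hU T le_sup_left fun t ht => by
    obtain ⟨h, hh, n, rfl⟩ := (hT t).1 ht
    exact ⟨h, hh, x ^ n, (hT _).2 ⟨1, H.one_mem, n, (one_mul _).symm⟩,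
      (hT _).2 ⟨1, H.one_mem, -n, by simp⟩, rfl⟩
  obtain ⟨s, hs, h₀, hh₀, hx⟩ := (hST x).1 ((hT x).2 ⟨1, H.one_mem, 1, by simp⟩)
  exact ⟨s, hSH hs, h₀, hh₀, hx, (hT _).1 ((hST _).2 ⟨s, hs, 1, H.one_mem, (mul_one _).symm⟩)⟩

end

theorem stmt8 {K : Type*} [CommGroup K] (H : Submonoid K)
    (hquot : ∀ x : K, ∃ a ∈ H, ∃ b ∈ H, x = a * b⁻¹) :
    IsValuation H ↔ (IsGCDMonoidIn H ∧ PropertyU H) := by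
  refine ⟨fun hval => ⟨hval.isGCDMonoidIn, hval.propertyU⟩, fun ⟨hgcd, hU⟩ x => ?_⟩
  obtain ⟨a₀, ha₀, b₀, hb₀, rfl⟩ := hquot x
  obtain ⟨a, ha, b, hb, hab, hx⟩ := exists_coprimeIn_of_isGCDMonoidIn hgcd ha₀ hb₀
  rw [hx]
  obtain ⟨s, hs, h₀, hh₀, hsx, h₁, hh₁, n, hsn⟩ := hU.exists_inv_eq_mul_zpow (a * b⁻¹)
  rcases eq_or_ne n 0 with rfl | hn
  · left
    rw [hsx, hsn, zpow_zero, mul_one]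
    exact mul_mem hh₁ hh₀
  obtain ⟨m, rfl | rfl⟩ := Int.eq_nat_or_neg n
  · right
    rw [zpow_natCast] at hsn
    rw [mul_inv_rev, inv_inv]
    exact hab.div_mem_of_inv_eq_mul_pow hgcd ha hb hs hh₁ (by omega) hsn
  · left
    rw [zpow_neg, zpow_natCast, ← inv_pow, mul_inv_rev, inv_inv] at hsn
    exact hab.symm.div_mem_of_inv_eq_mul_pow hgcd hb ha hs hh₁ (by omega) hsn
end

section
/- Let H be the additive submonoid of ℕ₀² generated by {(1,0), (1,1), (2,5)}. Then the set of atoms of H is exactly {(1,0), (1,1), (2,5)}, and each of these three elements is also an atom of the monoid H̃ = {(r,s) ∈ ℕ₀² : 5r ≥ 2s}. -/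
/-- `u` is an atom of the reduced additive monoid `S`. -/
def AtomOf (S : Set (ℤ × ℤ)) (u : ℤ × ℤ) : Prop :=
  u ∈ S ∧ u ≠ 0 ∧ ∀ x ∈ S, ∀ y ∈ S, u = x + y → x = 0 ∨ y = 0

/-- The submonoid of `ℤ²` generated by `(1,0)`, `(1,1)`, `(2,5)`. -/
def H13 : AddSubmonoid (ℤ × ℤ) :=
  AddSubmonoid.closure ({(1, 0), (1, 1), (2, 5)} : Set (ℤ × ℤ))

/-- The root closure `{(r,s) ∈ ℕ₀² : 5r ≥ 2s}` of `H13`. -/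
def Ht13 : Set (ℤ × ℤ) := {p | 0 ≤ p.1 ∧ 0 ≤ p.2 ∧ 2 * p.2 ≤ 5 * p.1}

lemma mem_H13 (p : ℤ × ℤ) :
    p ∈ H13 ↔ ∃ a b c : ℕ, p = ((a : ℤ) + b + 2 * c, (b : ℤ) + 5 * c) := by
  constructor
  · intro hp
    induction hp using AddSubmonoid.closure_induction with
    | mem x hx =>
      simp only [Set.mem_insert_iff, Set.mem_singleton_iff] at hx
      rcases hx with h | h | h
      · exact ⟨1, 0, 0, by simp [h]⟩
      · exact ⟨0, 1, 0, by simp [h]⟩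
      · exact ⟨0, 0, 1, by simp [h]⟩
    | zero => exact ⟨0, 0, 0, by simp [Prod.ext_iff]⟩
    | add x y _ _ hx hy =>
      obtain ⟨a, b, c, rfl⟩ := hx
      obtain ⟨a', b', c', rfl⟩ := hy
      exact ⟨a + a', b + b', c + c', by push_cast; simp [Prod.ext_iff]; constructor <;> ring⟩
  · rintro ⟨a, b, c, rfl⟩
    have h1 : ((1, 0) : ℤ × ℤ) ∈ H13 := AddSubmonoid.subset_closure (by simp)
    have h2 : ((1, 1) : ℤ × ℤ) ∈ H13 := AddSubmonoid.subset_closure (by simp)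
    have h3 : ((2, 5) : ℤ × ℤ) ∈ H13 := AddSubmonoid.subset_closure (by simp)
    have : ((a : ℤ) + b + 2 * c, (b : ℤ) + 5 * c)
        = a • ((1, 0) : ℤ × ℤ) + b • ((1, 1) : ℤ × ℤ) + c • ((2, 5) : ℤ × ℤ) := by
      simp [Prod.ext_iff, Prod.smul_def]
      constructor <;> ring
    rw [this]
    exact add_mem (add_mem (AddSubmonoid.nsmul_mem _ h1 a) (AddSubmonoid.nsmul_mem _ h2 b))
      (AddSubmonoid.nsmul_mem _ h3 c)

lemma atom_Ht13 (u : ℤ × ℤ) (hu : u ∈ ({(1, 0), (1, 1), (2, 5)} : Set (ℤ × ℤ))) :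
    AtomOf Ht13 u := by
  have mem : u ∈ Ht13 := by
    rcases hu with h | h | h <;> subst h <;> exact ⟨by norm_num, by norm_num, by norm_num⟩
  refine ⟨mem, ?_, ?_⟩
  · rcases hu with h | h | h <;> subst h <;> simp [Prod.ext_iff]
  · rintro ⟨x1, x2⟩ ⟨hx1, hx2, hx3⟩ ⟨y1, y2⟩ ⟨hy1, hy2, hy3⟩ heq
    simp only [Set.mem_insert_iff, Set.mem_singleton_iff] at hu
    rcases hu with h | h | h <;> rw [h] at heq <;>
      simp only [Prod.mk_add_mk, Prod.mk.injEq, Prod.ext_iff, Prod.fst_zero,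
        Prod.snd_zero] at heq ⊢ <;>
      dsimp only at * <;> omega

theorem stmt13 :
    (∀ u : ℤ × ℤ, AtomOf (H13 : Set (ℤ × ℤ)) u ↔
      u ∈ ({(1, 0), (1, 1), (2, 5)} : Set (ℤ × ℤ))) ∧
    (∀ u ∈ ({(1, 0), (1, 1), (2, 5)} : Set (ℤ × ℤ)), AtomOf Ht13 u) := by
  constructor
  · intro u
    constructor
    · rintro ⟨humem, hune, hind⟩
      obtain ⟨a, b, c, rfl⟩ := (mem_H13 u).mp humem
      have hne : a + b + c ≠ 0 := by
        rintro h
        apply hune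
        simp [Prod.ext_iff]
        omega
      by_cases htot : a + b + c = 1
      · -- exactly one generator
        rcases Nat.eq_zero_or_pos a with ha | ha
        · rcases Nat.eq_zero_or_pos b with hb | hb
          · have hc : c = 1 := by omega
            subst ha; subst hb; subst hc
            right; right; simp [Prod.ext_iff]
          · have hb1 : b = 1 := by omega
            have : a = 0 ∧ c = 0 := by omega
            subst hb1; rw [this.1, this.2]
            right; left; simp
        · have ha1 : a = 1 := by omega
          have : b = 0 ∧ c = 0 := by omega
          subst ha1; rw [this.1, this.2]
          left; simp
      · -- total ≥ 2: contradiction with atom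
        exfalso
        have htot2 : 2 ≤ a + b + c := by omega
        rcases Nat.eq_zero_or_pos a with ha | ha
        · rcases Nat.eq_zero_or_pos b with hb | hb
          · -- c ≥ 2
            obtain ⟨c', rfl⟩ : ∃ c', c = c' + 1 := ⟨c - 1, by omega⟩
            have hv : ((a : ℤ) + b + 2 * c', (b : ℤ) + 5 * c') ∈ (H13 : Set (ℤ × ℤ)) :=
              (mem_H13 _).mpr ⟨a, b, c', rfl⟩
            have hg : ((2, 5) : ℤ × ℤ) ∈ (H13 : Set (ℤ × ℤ)) :=
              (mem_H13 _).mpr ⟨0, 0, 1, by norm_num⟩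
            rcases hind _ hg _ hv (by simp only [Prod.mk_add_mk, Prod.mk.injEq]; push_cast; omega) with h | h
            · simp [Prod.ext_iff] at h
            · rw [Prod.ext_iff] at h; simp at h; omega
          · obtain ⟨b', rfl⟩ : ∃ b', b = b' + 1 := ⟨b - 1, by omega⟩
            have hv : ((a : ℤ) + b' + 2 * c, (b' : ℤ) + 5 * c) ∈ (H13 : Set (ℤ × ℤ)) :=
              (mem_H13 _).mpr ⟨a, b', c, rfl⟩
            have hg : ((1, 1) : ℤ × ℤ) ∈ (H13 : Set (ℤ × ℤ)) :=
              (mem_H13 _).mpr ⟨0, 1, 0, by norm_num⟩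
            rcases hind _ hg _ hv (by simp only [Prod.mk_add_mk, Prod.mk.injEq]; push_cast; omega) with h | h
            · simp [Prod.ext_iff] at h
            · rw [Prod.ext_iff] at h; simp at h; omega
        · obtain ⟨a', rfl⟩ : ∃ a', a = a' + 1 := ⟨a - 1, by omega⟩
          have hv : ((a' : ℤ) + b + 2 * c, (b : ℤ) + 5 * c) ∈ (H13 : Set (ℤ × ℤ)) :=
            (mem_H13 _).mpr ⟨a', b, c, rfl⟩
          have hg : ((1, 0) : ℤ × ℤ) ∈ (H13 : Set (ℤ × ℤ)) :=
            (mem_H13 _).mpr ⟨1, 0, 0, by norm_num⟩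
          rcases hind _ hg _ hv (by simp only [Prod.mk_add_mk, Prod.mk.injEq]; push_cast; omega) with h | h
          · simp [Prod.ext_iff] at h
          · rw [Prod.ext_iff] at h; simp at h; omega
    · intro hu
      obtain ⟨hmemt, hne, hind⟩ := atom_Ht13 u hu
      refine ⟨?_, hne, ?_⟩
      · rcases hu with h | h | h <;> subst h <;>
          exact AddSubmonoid.subset_closure (by simp)
      · intro x hx y hy heq
        have hxT : x ∈ Ht13 := by
          obtain ⟨a, b, c, rfl⟩ := (mem_H13 x).mp hx
          refine ⟨by positivity, by positivity, by push_cast; omega⟩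
        have hyT : y ∈ Ht13 := by
          obtain ⟨a, b, c, rfl⟩ := (mem_H13 y).mp hy
          refine ⟨by positivity, by positivity, by push_cast; omega⟩
        exact hind x hxT y hyT heq
  · exact atom_Ht13
end

section
/- Let H be the additive submonoid of ℕ₀² generated by {(1,0), (1,3), (1,5)}. Then the root closure of H inside ℤ² equals {(r, s) ∈ ℕ₀² : 5r ≥ s}, which is the submonoid generated by {(1,0), (1,1), (1,2), (1,3), (1,4), (1,5)}. -/
/-- The submonoid of `ℤ²` generated by `(1,0)`, `(1,3)`, `(1,5)`. -/
def H14 : AddSubmonoid (ℤ × ℤ) :=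
  AddSubmonoid.closure ({(1, 0), (1, 3), (1, 5)} : Set (ℤ × ℤ))

def KS : AddSubmonoid (ℤ × ℤ) where
  carrier := {x | 0 ≤ x.1 ∧ 0 ≤ x.2 ∧ x.2 ≤ 5 * x.1}
  zero_mem' := by norm_num
  add_mem' := by
    rintro ⟨a,b⟩ ⟨c,d⟩ ⟨h1,h2,h3⟩ ⟨h4,h5,h6⟩
    refine ⟨by simpa using by linarith, by simpa using by linarith, ?_⟩
    simp only [Prod.fst_add, Prod.snd_add]
    linarith

def RS : AddSubmonoid (ℤ × ℤ) where
  carrier := {x | ∃ n : ℕ, 0 < n ∧ n • x ∈ H14}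
  zero_mem' := ⟨1, one_pos, by simpa using zero_mem H14⟩
  add_mem' := by
    rintro x y ⟨n, hn, hx⟩ ⟨m, hm, hy⟩
    refine ⟨n * m, Nat.mul_pos hn hm, ?_⟩
    rw [smul_add]
    have h1 : (n * m) • x = m • (n • x) := by rw [mul_comm, mul_smul]
    have h2 : (n * m) • y = n • (m • y) := by rw [mul_smul]
    rw [h1, h2]
    exact add_mem (AddSubmonoid.nsmul_mem H14 hx m) (AddSubmonoid.nsmul_mem H14 hy n)

lemma H14_le_KS : H14 ≤ KS := by
  rw [H14, AddSubmonoid.closure_le]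
  rintro x hx
  simp only [Set.mem_insert_iff, Set.mem_singleton_iff] at hx
  rcases hx with rfl | rfl | rfl <;> exact ⟨by norm_num, by norm_num, by norm_num⟩

def C6 : AddSubmonoid (ℤ × ℤ) :=
  AddSubmonoid.closure ({(1, 0), (1, 1), (1, 2), (1, 3), (1, 4), (1, 5)} : Set (ℤ × ℤ))

lemma gen_mem (k : ℤ) (hk : 0 ≤ k) (hk5 : k ≤ 5) : ((1 : ℤ), k) ∈ C6 := by
  apply AddSubmonoid.subset_closure
  interval_cases k <;> simp

lemma KS_le_C6 : ∀ n : ℕ, ∀ r s : ℤ, r.toNat = n → 0 ≤ r → 0 ≤ s → s ≤ 5 * r →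
    ((r, s) : ℤ × ℤ) ∈ C6 := by
  intro n
  induction n using Nat.strong_induction_on with
  | _ n ih =>
    intro r s hrn hr hs h5
    by_cases h : 5 ≤ s
    · have hr1 : 1 ≤ r := by linarith
      have key : ((r - 1, s - 5) : ℤ × ℤ) ∈ C6 := by
        apply ih (r - 1).toNat _ _ _ rfl (by linarith) (by linarith) (by linarith)
        omega
      have e : ((1:ℤ),(5:ℤ)) + (r - 1, s - 5) = (r, s) := by
        simp only [Prod.mk_add_mk, Prod.mk.injEq]; constructor <;> ring
      exact e ▸ add_mem (gen_mem 5 (by norm_num) le_rfl) key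
    · push_neg at h
      rcases eq_or_lt_of_le hr with heq | hpos
      · have hs0 : s = 0 := by omega
        have hr0 : r = 0 := heq.symm
        subst hs0; subst hr0
        exact zero_mem C6
      · have key : ((r - 1, 0) : ℤ × ℤ) ∈ C6 := by
          rcases eq_or_lt_of_le (show (0:ℤ) + 1 ≤ r by omega) with heq | hpos'
          · simp [← heq, zero_mem]; exact zero_mem C6
          · apply ih (r - 1).toNat _ _ _ rfl (by omega) le_rfl (by linarith)
            omega
        have e : ((1:ℤ), s) + (r - 1, 0) = (r, s) := by
          simp only [Prod.mk_add_mk, Prod.mk.injEq]; constructor <;> ring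
        exact e ▸ add_mem (gen_mem s hs (by linarith)) key

-- membership helpers for H14
lemma m10 : ((1 : ℤ), (0 : ℤ)) ∈ H14 := AddSubmonoid.subset_closure (by simp)
lemma m13 : ((1 : ℤ), (3 : ℤ)) ∈ H14 := AddSubmonoid.subset_closure (by simp)
lemma m15 : ((1 : ℤ), (5 : ℤ)) ∈ H14 := AddSubmonoid.subset_closure (by simp)

lemma C6_le_RS : C6 ≤ RS := by
  rw [C6, AddSubmonoid.closure_le]
  rintro x hx
  simp only [Set.mem_insert_iff, Set.mem_singleton_iff] at hx
  rcases hx with rfl | rfl | rfl | rfl | rfl | rfl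
  · exact ⟨1, one_pos, by simpa using m10⟩
  · refine ⟨3, by norm_num, ?_⟩
    have e : (3:ℕ) • ((1:ℤ),(1:ℤ)) = ((1:ℤ),(3:ℤ)) + (1,0) + (1,0) := by
      norm_num [Prod.ext_iff]
    rw [e]; exact add_mem (add_mem m13 m10) m10
  · refine ⟨3, by norm_num, ?_⟩
    have e : (3:ℕ) • ((1:ℤ),(2:ℤ)) = ((1:ℤ),(3:ℤ)) + (1,3) + (1,0) := by
      norm_num [Prod.ext_iff]
    rw [e]; exact add_mem (add_mem m13 m13) m10
  · exact ⟨1, one_pos, by simpa using m13⟩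
  · refine ⟨5, by norm_num, ?_⟩
    have e : (5:ℕ) • ((1:ℤ),(4:ℤ)) = ((1:ℤ),(5:ℤ)) + (1,5) + (1,5) + (1,5) + (1,0) := by
      norm_num [Prod.ext_iff]
    rw [e]; exact add_mem (add_mem (add_mem (add_mem m15 m15) m15) m15) m10
  · exact ⟨1, one_pos, by simpa using m15⟩

theorem stmt14 : ∀ x : ℤ × ℤ,
    ((∃ n : ℕ, 0 < n ∧ n • x ∈ H14) ↔ (0 ≤ x.1 ∧ 0 ≤ x.2 ∧ x.2 ≤ 5 * x.1)) ∧
    ((∃ n : ℕ, 0 < n ∧ n • x ∈ H14) ↔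
      x ∈ AddSubmonoid.closure
        ({(1, 0), (1, 1), (1, 2), (1, 3), (1, 4), (1, 5)} : Set (ℤ × ℤ))) := by
  rintro ⟨r, s⟩
  have hAB : (∃ n : ℕ, 0 < n ∧ n • ((r, s) : ℤ × ℤ) ∈ H14) →
      (0 ≤ r ∧ 0 ≤ s ∧ s ≤ 5 * r) := by
    rintro ⟨n, hn, hmem⟩
    have h := H14_le_KS hmem
    obtain ⟨h1, h2, h3⟩ := h
    simp only [Prod.smul_fst, Prod.smul_snd] at h1 h2 h3
    simp only [nsmul_eq_mul] at h1 h2 h3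
    have hn' : (0 : ℤ) < n := by exact_mod_cast hn
    refine ⟨?_, ?_, ?_⟩ <;> nlinarith
  have hBC : (0 ≤ r ∧ 0 ≤ s ∧ s ≤ 5 * r) → ((r, s) : ℤ × ℤ) ∈ C6 := by
    rintro ⟨h1, h2, h3⟩
    exact KS_le_C6 r.toNat r s rfl h1 h2 h3
  have hCA : ((r, s) : ℤ × ℤ) ∈ C6 → (∃ n : ℕ, 0 < n ∧ n • ((r, s) : ℤ × ℤ) ∈ H14) :=
    fun h => C6_le_RS h
  constructor
  · exact ⟨hAB, fun h => hCA (hBC h)⟩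
  · exact ⟨fun h => hBC (hAB h), hCA⟩
end

section
/- Let H be the additive submonoid of ℕ₀² generated by {(2,0), (0,2), (1,1), (2,1), (1,2)}. Then H = {(0,0)} ∪ {(2r,0) : r ≥ 1} ∪ {(0,2s) : s ≥ 1} ∪ {(r,s) : r ≥ 1 and s ≥ 1}, and the set of atoms of H is exactly {(2,0), (0,2), (1,1), (2,1), (1,2)}. In particular, the atoms (2,0), (0,2), (2,1), (1,2) of H are not atoms of ℕ₀², so the set of atoms of H is not contained in the set of atoms of its root closure ℕ₀². -/
/-- The submonoid of `ℤ²` generated by `(2,0)`, `(0,2)`, `(1,1)`, `(2,1)`, `(1,2)`. -/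
def H16 : AddSubmonoid (ℤ × ℤ) :=
  AddSubmonoid.closure ({(2, 0), (0, 2), (1, 1), (2, 1), (1, 2)} : Set (ℤ × ℤ))

/-- The root closure `ℕ₀²` of `H16` inside `ℤ²`. -/
def Nset : Set (ℤ × ℤ) := {p | 0 ≤ p.1 ∧ 0 ≤ p.2}

lemma g1 : ((2,0):ℤ×ℤ) ∈ H16 := AddSubmonoid.subset_closure (by simp)
lemma g2 : ((0,2):ℤ×ℤ) ∈ H16 := AddSubmonoid.subset_closure (by simp)
lemma g3 : ((1,1):ℤ×ℤ) ∈ H16 := AddSubmonoid.subset_closure (by simp)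
lemma g4 : ((2,1):ℤ×ℤ) ∈ H16 := AddSubmonoid.subset_closure (by simp)
lemma g5 : ((1,2):ℤ×ℤ) ∈ H16 := AddSubmonoid.subset_closure (by simp)

lemma h20n : ∀ n : ℕ, ((2*(n:ℤ), 0) : ℤ×ℤ) ∈ H16 := by
  intro n
  induction n with
  | zero => simp; exact H16.zero_mem
  | succ k ih =>
      have h : ((2*((k:ℤ)+1), (0:ℤ)) : ℤ×ℤ) = (2*(k:ℤ), 0) + (2, 0) := by
        simp [Prod.ext_iff]; ring
      push_cast
      rw [h]; exact H16.add_mem ih g1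

lemma h02n : ∀ n : ℕ, ((0, 2*(n:ℤ)) : ℤ×ℤ) ∈ H16 := by
  intro n
  induction n with
  | zero => simp; exact H16.zero_mem
  | succ k ih =>
      have h : (((0:ℤ), 2*((k:ℤ)+1)) : ℤ×ℤ) = (0, 2*(k:ℤ)) + (0, 2) := by
        simp [Prod.ext_iff]; ring
      push_cast
      rw [h]; exact H16.add_mem ih g2

lemma hdiag : ∀ n : ℕ, (((n:ℤ), (n:ℤ)) : ℤ×ℤ) ∈ H16 := by
  intro n
  induction n with
  | zero => simp; exact H16.zero_mem
  | succ k ih =>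
      have h : ((((k:ℤ)+1), ((k:ℤ)+1)) : ℤ×ℤ) = ((k:ℤ), (k:ℤ)) + (1, 1) := by
        simp [Prod.ext_iff]
      push_cast
      rw [h]; exact H16.add_mem ih g3

lemma hcol (s : ℤ) (hs : 1 ≤ s) : ((1, s) : ℤ×ℤ) ∈ H16 := by
  rcases Int.even_or_odd (s - 1) with ⟨k, hk⟩ | ⟨k, hk⟩
  · have h : ((1, s) : ℤ×ℤ) = (0, 2*(k.toNat:ℤ)) + (1, 1) := by
      simp [Prod.ext_iff]; omega
    rw [h]; exact H16.add_mem (h02n k.toNat) g3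
  · have h : ((1, s) : ℤ×ℤ) = (0, 2*(k.toNat:ℤ)) + (1, 2) := by
      simp [Prod.ext_iff]; omega
    rw [h]; exact H16.add_mem (h02n k.toNat) g5

lemma hrow (r : ℤ) (hr : 1 ≤ r) : ((r, 1) : ℤ×ℤ) ∈ H16 := by
  rcases Int.even_or_odd (r - 1) with ⟨k, hk⟩ | ⟨k, hk⟩
  · have h : ((r, 1) : ℤ×ℤ) = (2*(k.toNat:ℤ), 0) + (1, 1) := by
      simp [Prod.ext_iff]; omega
    rw [h]; exact H16.add_mem (h20n k.toNat) g3
  · have h : ((r, 1) : ℤ×ℤ) = (2*(k.toNat:ℤ), 0) + (2, 1) := by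
      simp [Prod.ext_iff]; omega
    rw [h]; exact H16.add_mem (h20n k.toNat) g4

lemma hpos (r s : ℤ) (hr : 1 ≤ r) (hs : 1 ≤ s) : ((r, s) : ℤ×ℤ) ∈ H16 := by
  rcases le_or_gt r s with h | h
  · have key : ((r, s) : ℤ×ℤ) = (((r-1).toNat:ℤ), ((r-1).toNat:ℤ)) + (1, s - r + 1) := by
      simp [Prod.ext_iff]; omega
    rw [key]
    exact H16.add_mem (hdiag _) (hcol _ (by omega))
  · have key : ((r, s) : ℤ×ℤ) = (((s-1).toNat:ℤ), ((s-1).toNat:ℤ)) + (r - s + 1, 1) := by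
      simp [Prod.ext_iff]; omega
    rw [key]
    exact H16.add_mem (hdiag _) (hrow _ (by omega))

/-- Quantifier-free invariant satisfied by all elements of `H16`. -/
lemma memQ {p : ℤ × ℤ} (h : p ∈ H16) :
    (0 ≤ p.1 ∧ 0 ≤ p.2) ∧ (p.2 = 0 → p.1 % 2 = 0) ∧ (p.1 = 0 → p.2 % 2 = 0) := by
  induction h using AddSubmonoid.closure_induction with
  | mem x hx => rcases hx with h | h | h | h | h <;> subst h <;> norm_num
  | zero => norm_num
  | add x y hx hy ihx ihy =>
      simp only [Prod.fst_add, Prod.snd_add]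
      omega

lemma mem_iff (p : ℤ × ℤ) : p ∈ H16 ↔
    (p = 0 ∨ (∃ r : ℤ, 1 ≤ r ∧ p = (2 * r, 0)) ∨
      (∃ s : ℤ, 1 ≤ s ∧ p = (0, 2 * s)) ∨ (1 ≤ p.1 ∧ 1 ≤ p.2)) := by
  constructor
  · intro hp
    obtain ⟨⟨h1, h2⟩, h3, h4⟩ := memQ hp
    by_cases hb : p.2 = 0
    · by_cases ha : p.1 = 0
      · exact Or.inl (Prod.ext ha hb)
      · exact Or.inr (Or.inl ⟨p.1 / 2, by omega,
          by rw [Prod.ext_iff]; constructor <;> simp <;> omega⟩)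
    · by_cases ha : p.1 = 0
      · exact Or.inr (Or.inr (Or.inl ⟨p.2 / 2, by omega,
          by rw [Prod.ext_iff]; constructor <;> simp <;> omega⟩))
      · exact Or.inr (Or.inr (Or.inr ⟨by omega, by omega⟩))
  · rintro (h | ⟨r, hr, h⟩ | ⟨s, hs, h⟩ | ⟨h1, h2⟩)
    · rw [h]; exact H16.zero_mem
    · rw [h]
      have key : ((2*r, 0) : ℤ×ℤ) = (2*((r.toNat:ℤ)), 0) := by simp [Prod.ext_iff]; omega
      rw [key]; exact h20n r.toNat
    · rw [h]
      have key : ((0, 2*s) : ℤ×ℤ) = (0, 2*((s.toNat:ℤ))) := by simp [Prod.ext_iff]; omega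
      rw [key]; exact h02n s.toNat
    · have : p = (p.1, p.2) := rfl
      rw [this]; exact hpos _ _ h1 h2

theorem stmt16 :
    (∀ p : ℤ × ℤ, p ∈ H16 ↔
      (p = 0 ∨ (∃ r : ℤ, 1 ≤ r ∧ p = (2 * r, 0)) ∨
        (∃ s : ℤ, 1 ≤ s ∧ p = (0, 2 * s)) ∨ (1 ≤ p.1 ∧ 1 ≤ p.2))) ∧
    (∀ u : ℤ × ℤ, AtomOf (H16 : Set (ℤ × ℤ)) u ↔
      u ∈ ({(2, 0), (0, 2), (1, 1), (2, 1), (1, 2)} : Set (ℤ × ℤ))) ∧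
    (∀ u ∈ ({(2, 0), (0, 2), (2, 1), (1, 2)} : Set (ℤ × ℤ)), ¬AtomOf Nset u) ∧
    ¬(∀ u : ℤ × ℤ, AtomOf (H16 : Set (ℤ × ℤ)) u → AtomOf Nset u) := by
  have atom_iff : ∀ u : ℤ × ℤ, AtomOf (H16 : Set (ℤ × ℤ)) u ↔
      u ∈ ({(2, 0), (0, 2), (1, 1), (2, 1), (1, 2)} : Set (ℤ × ℤ)) := by
    intro u
    constructor
    · rintro ⟨hu, hne, hatom⟩
      rcases (mem_iff u).1 hu with h | ⟨r, hr, h⟩ | ⟨s, hs, h⟩ | ⟨h1, h2⟩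
      · exact absurd h hne
      · -- u = (2r, 0); must have r = 1
        have hr1 : r = 1 := by
          by_contra hr1
          have h2r : ((2*(r-1), 0) : ℤ×ℤ) ∈ H16 := (mem_iff _).2 (Or.inr (Or.inl ⟨r-1, by omega, rfl⟩))
          have := hatom (2,0) g1 (2*(r-1), 0) h2r (by rw [h, Prod.ext_iff]; constructor <;> simp <;> omega)
          rcases this with h' | h' <;> rw [Prod.ext_iff] at h' <;> simp at h' <;> omega
        subst hr1; rw [h]; norm_num
      · have hs1 : s = 1 := by
          by_contra hs1
          have h2s : ((0, 2*(s-1)) : ℤ×ℤ) ∈ H16 := (mem_iff _).2 (Or.inr (Or.inr (Or.inl ⟨s-1, by omega, rfl⟩)))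
          have := hatom (0,2) g2 (0, 2*(s-1)) h2s (by rw [h, Prod.ext_iff]; constructor <;> simp <;> omega)
          rcases this with h' | h' <;> rw [Prod.ext_iff] at h' <;> simp at h' <;> omega
        subst hs1; rw [h]; norm_num
      · -- u.1 ≥ 1 and u.2 ≥ 1
        have key1 : u.1 ≤ 2 ∧ u.2 ≤ 2 := by
          constructor
          · by_contra hc
            have hmem : ((u.1 - 2, u.2) : ℤ×ℤ) ∈ H16 := hpos _ _ (by omega) h2
            have := hatom (2,0) g1 (u.1 - 2, u.2) hmem (by rw [Prod.ext_iff]; constructor <;> simp)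
            rcases this with h' | h' <;> rw [Prod.ext_iff] at h' <;> simp at h' <;> omega
          · by_contra hc
            have hmem : ((u.1, u.2 - 2) : ℤ×ℤ) ∈ H16 := hpos _ _ h1 (by omega)
            have := hatom (0,2) g2 (u.1, u.2 - 2) hmem (by rw [Prod.ext_iff]; constructor <;> simp)
            rcases this with h' | h' <;> rw [Prod.ext_iff] at h' <;> simp at h' <;> omega
        have key2 : ¬(u.1 = 2 ∧ u.2 = 2) := by
          rintro ⟨ha, hb⟩
          have := hatom (1,1) g3 (1,1) g3 (by rw [Prod.ext_iff]; constructor <;> simp <;> omega)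
          rcases this with h' | h' <;> rw [Prod.ext_iff] at h' <;> simp at h'
        have : u = (u.1, u.2) := rfl
        rw [this]
        simp only [Set.mem_insert_iff, Set.mem_singleton_iff, Prod.ext_iff]
        omega
    · intro hu
      have hmem : u ∈ H16 := AddSubmonoid.subset_closure hu
      refine ⟨hmem, ?_, ?_⟩
      · rcases hu with h | h | h | h | h <;> subst h <;> simp [Prod.ext_iff]
      · intro x hx y hy hxy
        obtain ⟨⟨hx1, hx2⟩, hx3, hx4⟩ := memQ hx
        obtain ⟨⟨hy1, hy2⟩, hy3, hy4⟩ := memQ hy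
        rw [Prod.ext_iff] at hxy
        simp only [Prod.fst_add, Prod.snd_add] at hxy
        simp only [Prod.ext_iff, Prod.fst_zero, Prod.snd_zero]
        rcases hu with h | h | h | h | h <;> subst h <;> simp at hxy <;> omega
  refine ⟨mem_iff, atom_iff, ?_, ?_⟩
  · intro u hu
    rintro ⟨hmem, hne, hatom⟩
    rcases hu with h | h | h | h <;> subst h
    · have := hatom (1,0) (by constructor <;> norm_num) (1,0) (by constructor <;> norm_num) (by simp [Prod.ext_iff])
      rcases this with h' | h' <;> simp [Prod.ext_iff] at h'
    · have := hatom (0,1) (by constructor <;> norm_num) (0,1) (by constructor <;> norm_num) (by simp [Prod.ext_iff])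
      rcases this with h' | h' <;> simp [Prod.ext_iff] at h'
    · have := hatom (1,0) (by constructor <;> norm_num) (1,1) (by constructor <;> norm_num) (by simp [Prod.ext_iff])
      rcases this with h' | h' <;> simp [Prod.ext_iff] at h'
    · have := hatom (0,1) (by constructor <;> norm_num) (1,1) (by constructor <;> norm_num) (by simp [Prod.ext_iff])
      rcases this with h' | h' <;> simp [Prod.ext_iff] at h'
  · intro hall
    have h1 : AtomOf (H16 : Set (ℤ × ℤ)) (2,0) := (atom_iff _).2 (by norm_num)
    have h2 := hall _ h1
    rcases h2 with ⟨_, _, hatom⟩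
    have := hatom (1,0) (by constructor <;> norm_num) (1,0) (by constructor <;> norm_num) (by simp [Prod.ext_iff])
    rcases this with h' | h' <;> simp [Prod.ext_iff] at h'
end

section
/- Let H be the additive submonoid of ℕ₀² generated by {(2,0), (0,2), (1,1), (2,1), (1,2)}, let T₁ be the additive submonoid of ℤ² generated by {(1,0), (1,1), (0,2), (0,-2)} and T₂ the additive submonoid of ℤ² generated by {(0,1), (1,1), (2,0), (-2,0)}. Then T₁ = {(0, 2s) : s ∈ ℤ} ∪ {(r, s) : r ≥ 1, s ∈ ℤ}, T₂ = {(2r, 0) : r ∈ ℤ} ∪ {(r, s) : r ∈ ℤ, s ≥ 1}, and H = T₁ ∩ T₂. -/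
/-- The submonoid of `ℤ²` generated by `(2,0)`, `(0,2)`, `(1,1)`, `(2,1)`, `(1,2)`. -/
def H17 : AddSubmonoid (ℤ × ℤ) :=
  AddSubmonoid.closure ({(2, 0), (0, 2), (1, 1), (2, 1), (1, 2)} : Set (ℤ × ℤ))

/-- The submonoid of `ℤ²` generated by `(1,0)`, `(1,1)`, `(0,2)`, `(0,-2)`. -/
def T1 : AddSubmonoid (ℤ × ℤ) :=
  AddSubmonoid.closure ({(1, 0), (1, 1), (0, 2), (0, -2)} : Set (ℤ × ℤ))

/-- The submonoid of `ℤ²` generated by `(0,1)`, `(1,1)`, `(2,0)`, `(-2,0)`. -/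
def T2 : AddSubmonoid (ℤ × ℤ) :=
  AddSubmonoid.closure ({(0, 1), (1, 1), (2, 0), (-2, 0)} : Set (ℤ × ℤ))

lemma smul_pair (n : ℕ) (a b : ℤ) : n • ((a, b) : ℤ × ℤ) = (n * a, n * b) := by
  simp [Prod.smul_mk, nsmul_eq_mul]

lemma gen_mem_s17 {S : Set (ℤ × ℤ)} {p : ℤ × ℤ} (h : p ∈ S) :
    p ∈ AddSubmonoid.closure S := AddSubmonoid.subset_closure h

lemma T1_mem_of (a b : ℤ) (h : (∃ s : ℤ, (a, b) = (0, 2 * s)) ∨ 1 ≤ a) :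
    (a, b) ∈ T1 := by
  have g10 : ((1, 0) : ℤ × ℤ) ∈ T1 := gen_mem_s17 (by simp)
  have g11 : ((1, 1) : ℤ × ℤ) ∈ T1 := gen_mem_s17 (by simp)
  have g02 : ((0, 2) : ℤ × ℤ) ∈ T1 := gen_mem_s17 (by simp)
  have g02' : ((0, -2) : ℤ × ℤ) ∈ T1 := gen_mem_s17 (by simp)
  have hv : ∀ s : ℤ, ((0, 2 * s) : ℤ × ℤ) ∈ T1 := by
    intro s
    rcases le_or_gt 0 s with hs | hs
    · have := AddSubmonoid.nsmul_mem T1 g02 s.toNat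
      rwa [smul_pair, mul_zero, show ((s.toNat : ℤ) * 2 = 2 * s) by omega] at this
    · have := AddSubmonoid.nsmul_mem T1 g02' (-s).toNat
      rwa [smul_pair, mul_zero, show (((-s).toNat : ℤ) * (-2) = 2 * s) by omega] at this
  have hh : ∀ n : ℕ, ((n : ℤ), 0) ∈ T1 := by
    intro n
    have := AddSubmonoid.nsmul_mem T1 g10 n
    rwa [smul_pair, mul_one, mul_zero] at this
  rcases h with ⟨s, hs⟩ | ha
  · obtain ⟨h1, h2⟩ := Prod.mk.injEq .. ▸ hs
    rw [h1, h2]; exact hv s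
  · rcases Int.even_or_odd b with ⟨c, hc⟩ | ⟨c, hc⟩
    · have := AddSubmonoid.add_mem T1 (hh a.toNat) (hv c)
      rwa [Prod.mk_add_mk, add_zero, zero_add, show ((a.toNat : ℤ) = a) by omega,
        show (2 * c = b) by omega] at this
    · have := AddSubmonoid.add_mem T1 g11 (AddSubmonoid.add_mem T1 (hh (a - 1).toNat) (hv c))
      rwa [Prod.mk_add_mk, Prod.mk_add_mk, add_zero, zero_add,
        show (1 + ((a - 1).toNat : ℤ) = a) by omega, show (1 + 2 * c = b) by omega] at this

lemma T1_char (p : ℤ × ℤ) : p ∈ T1 ↔ ((∃ s : ℤ, p = (0, 2 * s)) ∨ 1 ≤ p.1) := by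
  constructor
  · intro hp
    induction hp using AddSubmonoid.closure_induction with
    | mem x hx =>
      rcases hx with h | h | h | h <;> subst h <;> simp
      exact ⟨-1, by norm_num⟩
    | zero => left; exact ⟨0, by norm_num; rfl⟩
    | add x y _ _ ihx ihy =>
      rcases ihx with ⟨s, hs⟩ | hx1 <;> rcases ihy with ⟨t, ht⟩ | hy1
      · left; exact ⟨s + t, by rw [hs, ht]; ext <;> simp <;> ring⟩
      · right; rw [hs]; simpa using hy1
      · right; rw [ht]; simpa using hx1
      · right; simp only [Prod.fst_add]; omega
  · intro h; exact T1_mem_of p.1 p.2 (by simpa using h)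

lemma T2_mem_of (a b : ℤ) (h : (∃ r : ℤ, (a, b) = (2 * r, 0)) ∨ 1 ≤ b) :
    (a, b) ∈ T2 := by
  have g01 : ((0, 1) : ℤ × ℤ) ∈ T2 := gen_mem_s17 (by simp)
  have g11 : ((1, 1) : ℤ × ℤ) ∈ T2 := gen_mem_s17 (by simp)
  have g20 : ((2, 0) : ℤ × ℤ) ∈ T2 := gen_mem_s17 (by simp)
  have g20' : ((-2, 0) : ℤ × ℤ) ∈ T2 := gen_mem_s17 (by simp)
  have hv : ∀ r : ℤ, ((2 * r, 0) : ℤ × ℤ) ∈ T2 := by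
    intro r
    rcases le_or_gt 0 r with hr | hr
    · have := AddSubmonoid.nsmul_mem T2 g20 r.toNat
      rwa [smul_pair, mul_zero, show ((r.toNat : ℤ) * 2 = 2 * r) by omega] at this
    · have := AddSubmonoid.nsmul_mem T2 g20' (-r).toNat
      rwa [smul_pair, mul_zero, show (((-r).toNat : ℤ) * (-2) = 2 * r) by omega] at this
  have hh : ∀ n : ℕ, ((0 : ℤ), (n : ℤ)) ∈ T2 := by
    intro n
    have := AddSubmonoid.nsmul_mem T2 g01 n
    rwa [smul_pair, mul_one, mul_zero] at this
  rcases h with ⟨r, hr⟩ | hb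
  · obtain ⟨h1, h2⟩ := Prod.mk.injEq .. ▸ hr
    rw [h1, h2]; exact hv r
  · rcases Int.even_or_odd a with ⟨c, hc⟩ | ⟨c, hc⟩
    · have := AddSubmonoid.add_mem T2 (hh b.toNat) (hv c)
      rwa [Prod.mk_add_mk, add_zero, zero_add, show ((b.toNat : ℤ) = b) by omega,
        show (2 * c = a) by omega] at this
    · have := AddSubmonoid.add_mem T2 g11 (AddSubmonoid.add_mem T2 (hh (b - 1).toNat) (hv c))
      rwa [Prod.mk_add_mk, Prod.mk_add_mk, add_zero, zero_add,
        show (1 + ((b - 1).toNat : ℤ) = b) by omega, show (1 + 2 * c = a) by omega] at this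

lemma T2_char (p : ℤ × ℤ) : p ∈ T2 ↔ ((∃ r : ℤ, p = (2 * r, 0)) ∨ 1 ≤ p.2) := by
  constructor
  · intro hp
    induction hp using AddSubmonoid.closure_induction with
    | mem x hx =>
      rcases hx with h | h | h | h <;> subst h <;> simp
      exact ⟨-1, by norm_num⟩
    | zero => left; exact ⟨0, by norm_num; rfl⟩
    | add x y _ _ ihx ihy =>
      rcases ihx with ⟨s, hs⟩ | hx1 <;> rcases ihy with ⟨t, ht⟩ | hy1
      · left; exact ⟨s + t, by rw [hs, ht]; ext <;> simp <;> ring⟩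
      · right; rw [hs]; simpa using hy1
      · right; rw [ht]; simpa using hx1
      · right; simp only [Prod.snd_add]; omega
  · intro h; exact T2_mem_of p.1 p.2 (by simpa using h)

lemma H_mem_even (x y : ℕ) : ((2 * x : ℤ), (2 * y : ℤ)) ∈ H17 := by
  have g20 : ((2, 0) : ℤ × ℤ) ∈ H17 := gen_mem_s17 (by simp)
  have g02 : ((0, 2) : ℤ × ℤ) ∈ H17 := gen_mem_s17 (by simp)
  have := AddSubmonoid.add_mem H17 (AddSubmonoid.nsmul_mem H17 g20 x)
    (AddSubmonoid.nsmul_mem H17 g02 y)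
  rw [smul_pair, smul_pair] at this
  rwa [Prod.mk_add_mk, mul_zero, mul_zero, add_zero, zero_add, mul_comm (x : ℤ),
    mul_comm (y : ℤ)] at this

lemma H_char (p : ℤ × ℤ) : p ∈ H17 ↔ (p ∈ T1 ∧ p ∈ T2) := by
  constructor
  · intro hp
    induction hp using AddSubmonoid.closure_induction with
    | mem x hx =>
      constructor
      · rw [T1_char]
        rcases hx with h | h | h | h | h <;> subst h <;> simp
      · rw [T2_char]
        rcases hx with h | h | h | h | h <;> subst h <;> simp
    | zero => exact ⟨zero_mem _, zero_mem _⟩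
    | add x y _ _ ihx ihy => exact ⟨add_mem ihx.1 ihy.1, add_mem ihx.2 ihy.2⟩
  · rintro ⟨h1, h2⟩
    rw [T1_char] at h1; rw [T2_char] at h2
    obtain ⟨a, b⟩ := p
    simp only at h1 h2
    rcases h1 with ⟨s, hs⟩ | ha <;> rcases h2 with ⟨r, hr⟩ | hb
    · -- p = (0, 2s) = (2r, 0) → p = 0
      obtain ⟨e1, e2⟩ := Prod.mk.injEq .. ▸ hs
      obtain ⟨f1, f2⟩ := Prod.mk.injEq .. ▸ hr
      have : a = 0 ∧ b = 0 := by omega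
      rw [this.1, this.2]; exact zero_mem _
    · -- p = (0, 2s), b ≥ 1 so s ≥ 1
      obtain ⟨e1, e2⟩ := Prod.mk.injEq .. ▸ hs
      have := H_mem_even 0 s.toNat
      rwa [show ((2 : ℤ) * ((0 : ℕ) : ℤ) = a) by simp [e1],
        show ((2 : ℤ) * (s.toNat : ℤ) = b) by omega] at this
    · -- p = (2r, 0), a ≥ 1 so r ≥ 1
      obtain ⟨f1, f2⟩ := Prod.mk.injEq .. ▸ hr
      have := H_mem_even r.toNat 0
      rwa [show ((2 : ℤ) * ((0 : ℕ) : ℤ) = b) by simp [f2],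
        show ((2 : ℤ) * (r.toNat : ℤ) = a) by omega] at this
    · -- a ≥ 1, b ≥ 1
      rcases Int.even_or_odd a with ⟨c, hc⟩ | ⟨c, hc⟩ <;>
        rcases Int.even_or_odd b with ⟨d, hd⟩ | ⟨d, hd⟩
      · have := H_mem_even c.toNat d.toNat
        rwa [show ((2 : ℤ) * (c.toNat : ℤ) = a) by omega,
          show ((2 : ℤ) * (d.toNat : ℤ) = b) by omega] at this
      · -- a even ≥ 2, b odd: (2,1) + even
        have g : ((2, 1) : ℤ × ℤ) ∈ H17 := gen_mem_s17 (by simp)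
        have := AddSubmonoid.add_mem H17 g (H_mem_even (c - 1).toNat d.toNat)
        rwa [Prod.mk_add_mk, show ((2 : ℤ) + 2 * ((c - 1).toNat : ℤ) = a) by omega,
          show ((1 : ℤ) + 2 * (d.toNat : ℤ) = b) by omega] at this
      · -- a odd, b even ≥ 2: (1,2) + even
        have g : ((1, 2) : ℤ × ℤ) ∈ H17 := gen_mem_s17 (by simp)
        have := AddSubmonoid.add_mem H17 g (H_mem_even c.toNat (d - 1).toNat)
        rwa [Prod.mk_add_mk, show ((1 : ℤ) + 2 * (c.toNat : ℤ) = a) by omega,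
          show ((2 : ℤ) + 2 * ((d - 1).toNat : ℤ) = b) by omega] at this
      · -- both odd: (1,1) + even
        have g : ((1, 1) : ℤ × ℤ) ∈ H17 := gen_mem_s17 (by simp)
        have := AddSubmonoid.add_mem H17 g (H_mem_even c.toNat d.toNat)
        rwa [Prod.mk_add_mk, show ((1 : ℤ) + 2 * (c.toNat : ℤ) = a) by omega,
          show ((1 : ℤ) + 2 * (d.toNat : ℤ) = b) by omega] at this

theorem stmt17 :
    (∀ p : ℤ × ℤ, p ∈ T1 ↔ ((∃ s : ℤ, p = (0, 2 * s)) ∨ 1 ≤ p.1)) ∧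
    (∀ p : ℤ × ℤ, p ∈ T2 ↔ ((∃ r : ℤ, p = (2 * r, 0)) ∨ 1 ≤ p.2)) ∧
    (∀ p : ℤ × ℤ, p ∈ H17 ↔ (p ∈ T1 ∧ p ∈ T2)) := by
  exact ⟨T1_char, T2_char, H_char⟩
end

section
/- Let H be a commutative cancellative monoid with quotient group K such that the submonoid extension H ⊆ H̃ is inert and H̃ = {x ∈ K : x^k ∈ H} for some fixed positive integer k. Then the extension H' ⊆ H̃ is also inert, where H' = {x ∈ K : there exists N ∈ ℕ with x^n ∈ H for all n ≥ N} is the seminormal closure of H. -/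
/-!
Let `x, y ∈ H̃` with `(xy)^m ∈ H` for all `m ≥ N`, and put `n = N k + 1`. Then `x^n, y^n ∈ H̃` and
`x^n y^n ∈ H`, so inertness of `H ⊆ H̃` gives a unit `ε` of `H̃` with `x^n ε, y^n ε⁻¹ ∈ H`.
Since `ε^{±k} ∈ H`, both `(xε)^k` and `(xε)^n = x^n ε · (ε^k)^N` lie in `H`; as `n` and `k` are
coprime, every sufficiently large power of `xε` is an `ℕ`-combination of these two, so `xε ∈ H'`,
and likewise `y ε⁻¹ ∈ H'`.
-/

variable {K : Type*} [CommGroup K]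

/-- The root closure of a submonoid `H` of its quotient group `K`. -/
def rootClosure (H : Submonoid K) : Set K :=
  {x : K | ∃ n : ℕ, 0 < n ∧ x ^ n ∈ H}

/-- The seminormal closure of a submonoid `H` of its quotient group `K`. -/
def seminormalClosure (H : Submonoid K) : Set K :=
  {x : K | ∃ N : ℕ, ∀ n : ℕ, N ≤ n → x ^ n ∈ H}

/-- The extension `A ⊆ B` is inert. -/
def InertExt (A B : Set K) : Prop :=
  ∀ x ∈ B, ∀ y ∈ B, x * y ∈ A →
    ∃ ε : K, ε ∈ B ∧ ε⁻¹ ∈ B ∧ x * ε ∈ A ∧ y * ε⁻¹ ∈ A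

theorem Submonoid.pow_mem_of_coprime {M : Type*} [CommMonoid M] (H : Submonoid M) {a : M}
    {p q m : ℕ} (hpq : p.Coprime q) (hp : a ^ p ∈ H) (hq : a ^ q ∈ H)
    (hm : p.pred * q.pred ≤ m) : a ^ m ∈ H := by
  obtain ⟨i, j, rfl⟩ :=
    Nat.exists_add_mul_eq_of_gcd_dvd_of_mul_pred_le p q m (hpq.gcd_eq_one ▸ one_dvd m) hm
  rw [pow_add, mul_comm i, mul_comm j, pow_mul, pow_mul]
  exact H.mul_mem (H.pow_mem hp i) (H.pow_mem hq j)

theorem mem_seminormalClosure_of_coprime {H : Submonoid K} {a : K} {p q : ℕ}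
    (hpq : p.Coprime q) (hp : a ^ p ∈ H) (hq : a ^ q ∈ H) : a ∈ seminormalClosure H :=
  ⟨p.pred * q.pred, fun _ hm => H.pow_mem_of_coprime hpq hp hq hm⟩

theorem mul_mem_seminormalClosure {H : Submonoid K} {z ε : K} {N k : ℕ}
    (hz : z ^ k ∈ H) (hε : ε ^ k ∈ H) (h : z ^ (N * k + 1) * ε ∈ H) :
    z * ε ∈ seminormalClosure H := by
  refine mem_seminormalClosure_of_coprime (p := N * k + 1) (q := k)
    ((Nat.coprime_mul_right_add_left 1 k N).mpr (Nat.coprime_one_left k)) ?_ ?_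
  · have : (z * ε) ^ (N * k + 1) = z ^ (N * k + 1) * ε * (ε ^ k) ^ N := by
      rw [mul_pow, pow_succ ε, pow_mul', mul_comm _ ε, mul_assoc]
    rw [this]
    exact H.mul_mem h (H.pow_mem hε N)
  · rw [mul_pow]
    exact H.mul_mem hz hε

theorem stmt18 (H : Submonoid K) (k : ℕ) (hk : 0 < k)
    (hchar : ∀ x : K, x ∈ rootClosure H ↔ x ^ k ∈ H)
    (hinert : InertExt (H : Set K) (rootClosure H)) :
    InertExt (seminormalClosure H) (rootClosure H) := by
  intro x hx y hy ⟨N, hN⟩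
  have pow_mem_root : ∀ z ∈ rootClosure H, z ^ (N * k + 1) ∈ rootClosure H := fun z hz => by
    rw [hchar, ← pow_mul, mul_comm, pow_mul]
    exact H.pow_mem ((hchar z).mp hz) _
  have hxy : x ^ (N * k + 1) * y ^ (N * k + 1) ∈ H := by
    rw [← mul_pow]
    exact hN _ (by nlinarith)
  obtain ⟨ε, hε, hε_inv, hxε, hyε⟩ :=
    hinert _ (pow_mem_root x hx) _ (pow_mem_root y hy) hxy
  exact ⟨ε, hε, hε_inv,
    mul_mem_seminormalClosure ((hchar x).mp hx) ((hchar ε).mp hε) hxε,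
    mul_mem_seminormalClosure ((hchar y).mp hy) ((hchar ε⁻¹).mp hε_inv) hyε⟩
end

section
/- Let F be a commutative cancellative monoid that is a discrete valuation monoid whose unit group F^× is finite cyclic of order n ≥ 2, generated by α, and let p ∈ F generate the maximal ideal (F \ F^× = pF). Let H be the submonoid of F generated by {p} ∪ {α^k p^n : 1 ≤ k ≤ n-1}. Then the extension H ⊆ F is not inert: there exist x, y ∈ F with x·y ∈ H but no ε ∈ F^× with x·ε ∈ H and y·ε^{-1} ∈ H (e.g., x = pα, y = p^{n-1}). -/
/-!
Every element of `H` is either a power of `p` or divisible by `p ^ n`, and these elements form a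
submonoid. An element `u * p ^ a` with `u` a unit and `a < n` lies in it only for `u = 1`. Now
`(p * α) * p ^ (n - 1) = α * p ^ n ∈ H`, but `p * α * ε ∈ H` forces `ε = α⁻¹`, and then
`p ^ (n - 1) * ε⁻¹ = α * p ^ (n - 1) ∈ H` forces `α = 1`.
-/

section CancelCommMonoid

variable {F : Type*} [CancelCommMonoid F] {p : F}

def powersOrPowDvd (p : F) (n : ℕ) : Submonoid F where
  carrier := {x | x ∈ Submonoid.powers p ∨ p ^ n ∣ x}
  one_mem' := Or.inl (Submonoid.one_mem _)
  mul_mem' := by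
    rintro x y (hx | hx) (hy | hy)
    · exact Or.inl (Submonoid.mul_mem _ hx hy)
    · exact Or.inr (dvd_mul_of_dvd_right hy x)
    · exact Or.inr (dvd_mul_of_dvd_left hx y)
    · exact Or.inr (dvd_mul_of_dvd_left hx y)

theorem mem_powersOrPowDvd {n : ℕ} {x : F} :
    x ∈ powersOrPowDvd p n ↔ (∃ m, p ^ m = x) ∨ p ^ n ∣ x :=
  Iff.rfl

theorem eq_zero_of_isUnit_pow (hp : ¬IsUnit p) {k : ℕ} (hk : IsUnit (p ^ k)) : k = 0 := by
  by_contra h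
  exact hp ((isUnit_pow_iff h).mp hk)

theorem units_eq_one_of_mul_pow_eq_pow (hp : ¬IsUnit p) {u : Fˣ} {a m : ℕ}
    (h : (u : F) * p ^ a = p ^ m) : u = 1 := by
  rcases le_total a m with ham | hma
  · obtain ⟨k, rfl⟩ := Nat.exists_eq_add_of_le ham
    have hu : (u : F) = p ^ k := mul_right_cancel (b := p ^ a) (by rw [h, pow_add, mul_comm])
    have hk : k = 0 := eq_zero_of_isUnit_pow hp (hu ▸ u.isUnit)
    exact Units.ext (by rw [hu, hk, pow_zero, Units.val_one])
  · obtain ⟨k, rfl⟩ := Nat.exists_eq_add_of_le hma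
    have hu : (u : F) * p ^ k = 1 :=
      mul_right_cancel (b := p ^ m) (by rw [mul_assoc, ← pow_add, add_comm, h, one_mul])
    have hk : k = 0 := eq_zero_of_isUnit_pow hp (IsUnit.of_mul_eq_one_right _ hu)
    exact Units.ext (by rwa [hk, pow_zero, mul_one] at hu)

theorem not_pow_dvd_units_mul_pow (hp : ¬IsUnit p) (u : Fˣ) {a n : ℕ} (han : a < n) :
    ¬p ^ n ∣ (u : F) * p ^ a := by
  rintro ⟨y, hy⟩
  obtain ⟨k, rfl⟩ := Nat.exists_eq_add_of_lt han
  have hu : (u : F) = p ^ (k + 1) * y :=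
    mul_right_cancel (b := p ^ a) (by rw [hy, add_assoc, pow_add]; ac_rfl)
  have hk : k + 1 = 0 :=
    eq_zero_of_isUnit_pow hp (isUnit_of_mul_isUnit_left (hu ▸ u.isUnit))
  omega

theorem units_eq_one_of_mul_pow_mem_powersOrPowDvd (hp : ¬IsUnit p) {u : Fˣ} {a n : ℕ}
    (han : a < n) (h : (u : F) * p ^ a ∈ powersOrPowDvd p n) : u = 1 := by
  rcases mem_powersOrPowDvd.mp h with ⟨m, hm⟩ | hdvd
  · exact units_eq_one_of_mul_pow_eq_pow hp hm.symm
  · exact absurd hdvd (not_pow_dvd_units_mul_pow hp u han)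

end CancelCommMonoid

theorem stmt19_general {F : Type*} [CancelCommMonoid F] (n : ℕ) (hn : 2 ≤ n)
    (α : Fˣ) (hα : orderOf α = n)
    (p : F) (hp : ¬IsUnit p)
    (H : Submonoid F)
    (hH : H = Submonoid.closure
      ({p} ∪ {x : F | ∃ k : ℕ, 1 ≤ k ∧ k ≤ n - 1 ∧ x = (↑α : F) ^ k * p ^ n})) :
    ∃ x y : F, x * y ∈ H ∧ ∀ ε : Fˣ, ¬(x * ↑ε ∈ H ∧ y * ↑ε⁻¹ ∈ H) := by
  have hHle : H ≤ powersOrPowDvd p n := by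
    rw [hH, Submonoid.closure_le]
    rintro x (rfl | ⟨k, -, -, rfl⟩)
    · exact Or.inl (Submonoid.mem_powers x)
    · exact Or.inr (dvd_mul_left _ _)
  refine ⟨p * α, p ^ (n - 1), ?_, ?_⟩
  · rw [hH]
    refine Submonoid.subset_closure (Or.inr ⟨1, le_rfl, by omega, ?_⟩)
    rw [pow_one, mul_right_comm, ← pow_succ', Nat.sub_add_cancel (by omega), mul_comm]
  · rintro ε ⟨hx, hy⟩
    have hαε : α * ε = 1 := units_eq_one_of_mul_pow_mem_powersOrPowDvd hp (a := 1) (by omega)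
      (hHle (by simpa [mul_comm, mul_left_comm] using hx))
    rw [← eq_inv_of_mul_eq_one_left hαε] at hy
    have hα1 : α = 1 := units_eq_one_of_mul_pow_mem_powersOrPowDvd hp (a := n - 1) (by omega)
      (hHle (by rwa [mul_comm]))
    rw [hα1, orderOf_one] at hα
    omega

theorem stmt19 {F : Type*} [CancelCommMonoid F] (n : ℕ) (hn : 2 ≤ n)
    (α : Fˣ) (hα : orderOf α = n) (hcyc : ∀ u : Fˣ, ∃ k : ℕ, u = α ^ k)
    (p : F) (hp : ¬IsUnit p)
    (hdvm : ∀ x : F, ∃ (ε : Fˣ) (m : ℕ), x = ↑ε * p ^ m)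
    (hmax : ∀ x : F, ¬IsUnit x → ∃ y : F, x = p * y)
    (H : Submonoid F)
    (hH : H = Submonoid.closure
      ({p} ∪ {x : F | ∃ k : ℕ, 1 ≤ k ∧ k ≤ n - 1 ∧ x = (↑α : F) ^ k * p ^ n})) :
    ∃ x y : F, x * y ∈ H ∧ ∀ ε : Fˣ, ¬(x * ↑ε ∈ H ∧ y * ↑ε⁻¹ ∈ H) :=
  stmt19_general n hn α hα p hp H hH
end
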